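/- Let f(x) = ½·dist_K(x)² for a closed set K ⊆ ℝⁿ, and suppose x has a unique projection p = proj_K(x) with x ∉ K. Then f is differentiable at x with ∇f(x) = x - p = dist_K(x)·∇dist_K(x), where ∇dist_K(x) = (x - p)/‖x - p‖. -/

import Mathlib

/-!
Write `f = ½ infDist(·, K)²`. If `p` is a nearest point of `K` to `x`, then `f` lies below
the paraboloid `y ↦ f x + ⟪x - p, y - x⟫ + ½‖y - x‖²`, while for any nearest point `q` of `K`
to `y`, `f y ≥ f x + ⟪x - q, y - x⟫`. The two bounds differ from the linearisation at `x` by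
`‖y - x‖ (‖y - x‖/2 + ‖q - p‖)`, which is `o(‖y - x‖)` because, by compactness, nearest
points to `y` converge to the unique nearest point `p` as `y → x`.
-/

open Metric Filter Topology
open scoped RealInnerProductSpace

section Proper

variable {α : Type*} [MetricSpace α] [ProperSpace α]

theorem tendsto_nearest_of_unique {K : Set α} (hK : IsClosed K) {x p : α} {P : α → α}
    (hPK : ∀ y, P y ∈ K) (hPd : ∀ y, infDist y K = dist y (P y))
    (huniq : ∀ q ∈ K, dist x q = infDist x K → q = p) :
    Tendsto P (𝓝 x) (𝓝 p) := by
  have hbound : ∀ y, dist x (P y) ≤ infDist x K + 2 * dist y x := fun y => by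
    linarith [dist_triangle x y (P y), hPd y, dist_comm x y,
      infDist_le_infDist_add_dist (x := y) (y := x) (s := K)]
  have hnear : ∀ ε > 0, ∀ᶠ y in 𝓝 x, P y ∈ closedBall x (infDist x K + ε) := fun ε hε => by
    filter_upwards [ball_mem_nhds x (half_pos hε)] with y hy
    rw [mem_closedBall, dist_comm]
    linarith [hbound y, mem_ball.1 hy]
  have hcpt : IsCompact (K ∩ closedBall x (infDist x K + 1)) :=
    (isCompact_closedBall x _).inter_left hK
  refine hcpt.tendsto_nhds_of_unique_mapClusterPt ((Eventually.of_forall hPK).and (hnear 1 one_pos))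
    fun q ⟨hqK, _⟩ hq => huniq q hqK ?_
  refine le_antisymm (le_of_forall_pos_le_add fun ε hε => ?_) (infDist_le_dist_of_mem hqK)
  rw [dist_comm, ← mem_closedBall]
  exact isClosed_closedBall.mem_of_mapClusterPt hq (hnear ε hε)

end Proper

section InnerProduct

variable {E : Type*} [NormedAddCommGroup E] [InnerProductSpace ℝ E] {K : Set E}

theorem half_sq_infDist_le_add_inner {x p : E} (hp : p ∈ K) (hproj : infDist x K = ‖x - p‖)
    (y : E) :
    (1/2) * infDist y K ^ 2
      ≤ (1/2) * infDist x K ^ 2 + ⟪x - p, y - x⟫ + (1/2) * ‖y - x‖ ^ 2 := by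
  have hle : infDist y K ≤ ‖y - p‖ := by
    rw [← dist_eq_norm]; exact infDist_le_dist_of_mem hp
  have hexpand : ‖y - p‖ ^ 2 = ‖y - x‖ ^ 2 + 2 * ⟪x - p, y - x⟫ + ‖x - p‖ ^ 2 := by
    rw [show y - p = (y - x) + (x - p) by abel, norm_add_sq_real, real_inner_comm]
  rw [hproj]
  nlinarith [infDist_nonneg (x := y) (s := K)]

theorem add_inner_le_half_sq_infDist {y q : E} (hq : q ∈ K) (hproj : infDist y K = ‖y - q‖)
    (x : E) :
    (1/2) * infDist x K ^ 2 + ⟪x - q, y - x⟫ ≤ (1/2) * infDist y K ^ 2 := by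
  have hle : infDist x K ≤ ‖x - q‖ := by
    rw [← dist_eq_norm]; exact infDist_le_dist_of_mem hq
  have hexpand : ‖y - q‖ ^ 2 = ‖y - x‖ ^ 2 + 2 * ⟪x - q, y - x⟫ + ‖x - q‖ ^ 2 := by
    rw [show y - q = (y - x) + (x - q) by abel, norm_add_sq_real, real_inner_comm]
  rw [hproj]
  nlinarith [infDist_nonneg (x := x) (s := K), sq_nonneg ‖y - x‖]

theorem abs_half_sq_infDist_sub_inner_le {x p y q : E} (hp : p ∈ K)
    (hxp : infDist x K = ‖x - p‖) (hq : q ∈ K) (hyq : infDist y K = ‖y - q‖) :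
    |(1/2) * infDist y K ^ 2 - (1/2) * infDist x K ^ 2 - ⟪x - p, y - x⟫|
      ≤ ‖y - x‖ * (‖y - x‖ / 2 + ‖q - p‖) := by
  have hupper := half_sq_infDist_le_add_inner hp hxp y
  have hlower := add_inner_le_half_sq_infDist hq hyq x
  have hshift : ⟪x - q, y - x⟫ - ⟪x - p, y - x⟫ = ⟪p - q, y - x⟫ := by
    rw [← inner_sub_left, sub_sub_sub_cancel_left]
  have hcs : -(‖q - p‖ * ‖y - x‖) ≤ ⟪p - q, y - x⟫ := by
    rw [← norm_sub_rev p q]; exact neg_le_of_abs_le (abs_real_inner_le_norm _ _)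
  rw [abs_le]
  constructor <;> nlinarith [norm_nonneg (y - x), norm_nonneg (q - p)]

theorem hasGradientAt_half_sq_infDist [CompleteSpace E] {x p : E} (hp : p ∈ K)
    (hproj : infDist x K = ‖x - p‖) {P : E → E} (hPK : ∀ y, P y ∈ K)
    (hPd : ∀ y, infDist y K = ‖y - P y‖) (hPt : Tendsto P (𝓝 x) (𝓝 p)) :
    HasGradientAt (fun y => (1/2) * infDist y K ^ 2) (x - p) x := by
  have hsmall : Tendsto (fun y => ‖y - x‖ / 2 + ‖P y - p‖) (𝓝 x) (𝓝 0) := by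
    simpa using ((tendsto_norm_sub_self x).div_const 2).add
      (tendsto_iff_norm_sub_tendsto_zero.1 hPt)
  rw [hasGradientAt_iff_isLittleO, Asymptotics.isLittleO_iff]
  intro c hc
  filter_upwards [hsmall.eventually (eventually_le_nhds hc)] with y hy
  calc _ ≤ ‖y - x‖ * (‖y - x‖ / 2 + ‖P y - p‖) :=
        abs_half_sq_infDist_sub_inner_le hp hproj (hPK y) (hPd y)
    _ ≤ c * ‖y - x‖ := by rw [mul_comm c]; exact mul_le_mul_of_nonneg_left hy (norm_nonneg _)

end InnerProduct

theorem norm_smul_inv_norm_smul {E : Type*} [NormedAddCommGroup E] [NormedSpace ℝ E] (v : E) :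
    ‖v‖ • (‖v‖⁻¹ • v) = v := by
  rcases eq_or_ne v 0 with rfl | hv
  · simp
  · rw [smul_inv_smul₀ (norm_ne_zero_iff.2 hv)]

theorem grad_half_sq_dist_general {n : ℕ} (K : Set (EuclideanSpace ℝ (Fin n)))
    (hK : IsClosed K)
    (x p : EuclideanSpace ℝ (Fin n))
    (hp : p ∈ K)
    (hproj : ‖x - p‖ = Metric.infDist x K)
    (huniq : ∀ q ∈ K, ‖x - q‖ = Metric.infDist x K → q = p) :
    HasGradientAt (fun y => (1/2) * (Metric.infDist y K)^2) (x - p) x ∧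
    x - p = (Metric.infDist x K) • ((‖x - p‖)⁻¹ • (x - p)) := by
  choose P hPK hPd using fun y => hK.exists_infDist_eq_dist ⟨p, hp⟩ y
  have hPt : Tendsto P (𝓝 x) (𝓝 p) :=
    tendsto_nearest_of_unique hK hPK hPd fun q hq hdq => huniq q hq (by rwa [← dist_eq_norm])
  refine ⟨hasGradientAt_half_sq_infDist hp hproj.symm hPK
    (fun y => (hPd y).trans (dist_eq_norm _ _)) hPt, ?_⟩
  rw [← hproj, norm_smul_inv_norm_smul]

theorem grad_half_sq_dist {n : ℕ} (K : Set (EuclideanSpace ℝ (Fin n)))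
    (hKne : K.Nonempty) (hK : IsClosed K)
    (x p : EuclideanSpace ℝ (Fin n))
    (hxK : x ∉ K) (hp : p ∈ K)
    (hproj : ‖x - p‖ = Metric.infDist x K)
    (huniq : ∀ q ∈ K, ‖x - q‖ = Metric.infDist x K → q = p) :
    HasGradientAt (fun y => (1/2) * (Metric.infDist y K)^2) (x - p) x ∧
    x - p = (Metric.infDist x K) • ((‖x - p‖)⁻¹ • (x - p)) :=
  grad_half_sq_dist_general K hK x p hp hproj huniq
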